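/- Every finite strongly connected directed multigraph has a multi-Eulerian tour: a closed walk that uses every directed edge at least once and uses edges e and f the same number of times whenever tail(e) = tail(f). -/

import Mathlib

open Finset

structure Multigraph (V E : Type) where
  tail : E → V
  head : E → V

namespace Multigraph

variable {V E : Type} [Fintype V] [Fintype E] [DecidableEq V] [DecidableEq E]

/-- Outdegree of a vertex. -/
def outdeg (G : Multigraph V E) (v : V) : ℕ :=
  (Finset.univ.filter (fun e => G.tail e = v)).card

/-- Indegree of a vertex. -/
def indeg (G : Multigraph V E) (v : V) : ℕ :=
  (Finset.univ.filter (fun e => G.head e = v)).card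

/-- Number of edges from `u` to `v`. -/
def edgeCount (G : Multigraph V E) (u v : V) : ℕ :=
  (Finset.univ.filter (fun e => G.tail e = u ∧ G.head e = v)).card

/-- Directed graph Laplacian: `Δ u v = d_v δ_{uv} − d_{vu}`. -/
def laplacian (G : Multigraph V E) : Matrix V V ℤ :=
  fun u v => (if u = v then (G.outdeg v : ℤ) else 0) - (G.edgeCount v u : ℤ)

def Adj (G : Multigraph V E) (u v : V) : Prop := ∃ e, G.tail e = u ∧ G.head e = v

/-- Strong connectivity: every vertex reaches every other by a directed path. -/
def StronglyConnected (G : Multigraph V E) : Prop :=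
  ∀ u v : V, Relation.ReflTransGen G.Adj u v

/-- A list of edges forms a walk: consecutive edges are incident. -/
def IsWalk (G : Multigraph V E) : List E → Prop
  | [] => True
  | [_] => True
  | e :: f :: rest => G.head e = G.tail f ∧ G.IsWalk (f :: rest)

/-- A nonempty walk that returns to its starting vertex. -/
def IsClosedWalk (G : Multigraph V E) (w : List E) : Prop :=
  w ≠ [] ∧ G.IsWalk w ∧ w.getLast?.map G.head = w.head?.map G.tail

/-- The walk starts at vertex `v`. -/
def StartsAt (G : Multigraph V E) (w : List E) (v : V) : Prop :=
  w.head?.map G.tail = some v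

/-- A π-Eulerian tour: closed walk using each edge `e` exactly `π (tail e)` times. -/
def IsPiEulerian (G : Multigraph V E) (π : V → ℕ) (w : List E) : Prop :=
  G.IsClosedWalk w ∧ ∀ e : E, w.count e = π (G.tail e)

/-- An Eulerian tour: closed walk using each edge exactly once. -/
def IsEulerian (G : Multigraph V E) (w : List E) : Prop :=
  G.IsClosedWalk w ∧ ∀ e : E, w.count e = 1

/-- A multi-Eulerian tour: closed walk using each edge at least once, and edges
with the same tail equally often. -/
def IsMultiEulerian (G : Multigraph V E) (w : List E) : Prop :=
  G.IsClosedWalk w ∧ (∀ e : E, 1 ≤ w.count e) ∧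
  ∀ e f : E, G.tail e = G.tail f → w.count e = w.count f

/-- A spanning tree oriented toward `w`: every vertex other than `w` has exactly one
outgoing edge, `w` has none, and every vertex reaches `w` inside the subgraph. -/
def IsTreeTo (G : Multigraph V E) (w : V) (T : Finset E) : Prop :=
  (∀ v, v ≠ w → (T.filter (fun e => G.tail e = v)).card = 1) ∧
  (∀ e ∈ T, G.tail e ≠ w) ∧
  ∀ v : V, Relation.ReflTransGen (fun a b => ∃ e ∈ T, G.tail e = a ∧ G.head e = b) v w

/-- Number of spanning trees oriented toward `w`. -/
noncomputable def treeCount (G : Multigraph V E) (w : V) : ℕ :=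
  Nat.card {T : Finset E // G.IsTreeTo w T}

end Multigraph

/-!
Run a rotor walk: each vertex `v` carries a rotor pointing at one of its out-edges, and a chip
at `v` leaves along the rotor, which is then advanced cyclically through the out-edges of `v`.
The state space is finite, so the walk is eventually periodic, and one period is a closed walk.
Over a period each rotor returns to its initial position, so the out-edges of a vertex are used
in whole turns of its rotor, hence equally often. Finally, in a closed walk whose counts are
constant on out-stars, the vertices it leaves are closed under edges, so by strong connectivity
every vertex and hence every edge is used.
-/

open Function Equiv

theorem List.count_apply_eq_of_cons_map_eq_append {α : Type*} [DecidableEq α] {σ : Equiv.Perm α}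
    {l : List α} {x : α} (h : x :: l.map σ = l ++ [x]) (a : α) :
    l.count (σ a) = l.count a := by
  have hperm : (l.map σ).Perm l := (h ▸ List.perm_append_singleton x l).cons_inv
  rw [← hperm.count_eq, List.count_map_of_injective _ _ σ.injective]

theorem Equiv.Perm.SameCycle.apply_eq_of_forall_comp_eq {α β : Type*} {σ : Perm α}
    {c : α → β} (hc : ∀ a, c (σ a) = c a) {x y : α} (h : σ.SameCycle x y) : c x = c y := by
  obtain ⟨i, rfl⟩ := h
  induction i using Int.induction_on with
  | zero => rfl
  | succ i ih => rw [add_comm, zpow_one_add, Perm.mul_apply, hc, ih]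
  | pred i ih =>
    rw [ih, ← hc ((σ ^ (-(i : ℤ) - 1)) x), ← Perm.mul_apply, ← zpow_one_add,
      add_sub_cancel]

theorem Function.exists_iterate_mem_periodicPts {α : Type*} [Finite α] (f : α → α) (x : α) :
    ∃ n, f^[n] x ∈ periodicPts f := by
  obtain ⟨m, n, hmn, heq⟩ := Finite.exists_ne_map_eq_of_infinite (f^[·] x)
  wlog hlt : m < n generalizing m n
  · exact this n m hmn.symm heq.symm (lt_of_le_of_ne (not_lt.1 hlt) hmn.symm)
  refine ⟨m, mk_mem_periodicPts (Nat.sub_pos_of_lt hlt) ?_⟩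
  rw [IsPeriodicPt, IsFixedPt, ← iterate_add_apply, Nat.sub_add_cancel hlt.le]
  exact heq.symm

namespace Multigraph

variable {V E : Type} {G : Multigraph V E}

theorem IsWalk.exists_tail_eq_head_or_getLast {e : E} : ∀ {w : List E}, G.IsWalk w → e ∈ w →
    (∃ f ∈ w, G.tail f = G.head e) ∨ w.getLast?.map G.head = some (G.head e)
  | [_], _, he => Or.inr (by simp_all)
  | _ :: b :: l, ⟨hab, hw⟩, he => by
    rcases List.mem_cons.1 he with rfl | he
    · exact Or.inl ⟨b, by simp, hab.symm⟩
    rcases hw.exists_tail_eq_head_or_getLast he with ⟨f, hf, hfe⟩ | h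
    · exact Or.inl ⟨f, List.mem_cons_of_mem _ hf, hfe⟩
    · exact Or.inr (by rwa [List.getLast?_cons_cons])

theorem IsClosedWalk.exists_tail_eq_head {w : List E} (hw : G.IsClosedWalk w) {e : E}
    (he : e ∈ w) : ∃ f ∈ w, G.tail f = G.head e := by
  obtain ⟨hne, hwalk, hclosed⟩ := hw
  refine (hwalk.exists_tail_eq_head_or_getLast he).elim id fun h => ?_
  obtain ⟨a, l, rfl⟩ := List.exists_cons_of_ne_nil hne
  rw [hclosed, List.head?_cons, Option.map_some, Option.some_inj] at h
  exact ⟨a, List.mem_cons_self, h⟩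

theorem StronglyConnected.forall_of_adj_closed (hsc : G.StronglyConnected) {S : V → Prop}
    {u : V} (hu : S u) (hS : ∀ ⦃a b⦄, G.Adj a b → S a → S b) (v : V) : S v := by
  induction hsc u v with
  | refl => exact hu
  | tail _ hbc ih => exact hS hbc ih

theorem StronglyConnected.exists_tail_eq [Nonempty E] (hsc : G.StronglyConnected) (v : V) :
    ∃ e, G.tail e = v := by
  obtain ⟨e₀⟩ := ‹Nonempty E›
  rcases (hsc v (G.tail e₀)).cases_head with h | ⟨_, ⟨e, he, _⟩, _⟩
  exacts [⟨e₀, h.symm⟩, ⟨e, he⟩]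

section Counts

variable [DecidableEq E] {w : List E}

theorem IsClosedWalk.one_le_count (hsc : G.StronglyConnected) (hw : G.IsClosedWalk w)
    (hbal : ∀ e f, G.tail e = G.tail f → w.count e = w.count f) (e : E) : 1 ≤ w.count e := by
  have hleaves : ∀ v, ∃ f ∈ w, G.tail f = v := by
    obtain ⟨a, l, rfl⟩ := List.exists_cons_of_ne_nil hw.1
    refine hsc.forall_of_adj_closed ⟨a, List.mem_cons_self, rfl⟩ ?_
    rintro _ _ ⟨g, rfl, rfl⟩ ⟨f, hf, hfg⟩
    have hg : g ∈ a :: l := List.count_pos_iff.1 (hbal g f hfg.symm ▸ List.count_pos_iff.2 hf)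
    exact hw.exists_tail_eq_head hg
  obtain ⟨f, hf, hfe⟩ := hleaves (G.tail e)
  rw [hbal e f hfe.symm]
  exact List.count_pos_iff.2 hf

theorem IsClosedWalk.isMultiEulerian (hsc : G.StronglyConnected) (hw : G.IsClosedWalk w)
    (hbal : ∀ e f, G.tail e = G.tail f → w.count e = w.count f) : G.IsMultiEulerian w :=
  ⟨hw, hw.one_le_count hsc hbal, hbal⟩

end Counts

section Rotor

variable (G) [DecidableEq V] (τ : V → Perm E)

/-- A state `(u, r)` of the rotor walk: the chip sits at `u` and the rotor at `v` is `r v`. -/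
def rotorStep (s : V × (V → E)) : V × (V → E) :=
  (G.head (s.2 s.1), update s.2 s.1 (τ s.1 (s.2 s.1)))

def rotorTrail (s : V × (V → E)) : ℕ → List E
  | 0 => []
  | n + 1 => s.2 s.1 :: rotorTrail (G.rotorStep τ s) n

def IsRotorConfig (r : V → E) : Prop :=
  ∀ v, G.tail (r v) = v

theorem rotorTrail_getLast?_map_head (s : V × (V → E)) (n : ℕ) :
    (G.rotorTrail τ s (n + 1)).getLast?.map G.head = some ((G.rotorStep τ)^[n + 1] s).1 := by
  induction n generalizing s with
  | zero => rfl
  | succ n ih => rw [iterate_succ_apply, ← ih]; rfl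

variable {G τ} (hτ : ∀ v, Set.MapsTo (τ v) {e | G.tail e = v} {e | G.tail e = v})
include hτ

theorem IsRotorConfig.rotorStep {s : V × (V → E)} (hs : G.IsRotorConfig s.2) :
    G.IsRotorConfig (G.rotorStep τ s).2 := by
  intro v
  by_cases hv : v = s.1
  · subst hv
    simpa only [Multigraph.rotorStep, update_self, Set.mem_ofPred_eq] using hτ _ (hs _)
  · simpa only [Multigraph.rotorStep, update_of_ne hv] using hs v

theorem IsRotorConfig.iterate_rotorStep {s : V × (V → E)} (hs : G.IsRotorConfig s.2) (n : ℕ) :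
    G.IsRotorConfig ((G.rotorStep τ)^[n] s).2 := by
  induction n with
  | zero => exact hs
  | succ n ih => rw [iterate_succ_apply']; exact ih.rotorStep hτ

theorem isWalk_rotorTrail {s : V × (V → E)} (hs : G.IsRotorConfig s.2) (n : ℕ) :
    G.IsWalk (G.rotorTrail τ s n) := by
  induction n generalizing s with
  | zero => trivial
  | succ n ih =>
    cases n with
    | zero => trivial
    | succ n => exact ⟨((hs.rotorStep hτ) _).symm, ih (hs.rotorStep hτ)⟩

theorem isClosedWalk_rotorTrail {s : V × (V → E)} (hs : G.IsRotorConfig s.2) {p : ℕ}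
    (hp : 0 < p) (hper : IsPeriodicPt (G.rotorStep τ) p s) :
    G.IsClosedWalk (G.rotorTrail τ s p) := by
  obtain ⟨n, rfl⟩ := Nat.exists_eq_add_one_of_ne_zero hp.ne'
  refine ⟨List.cons_ne_nil _ _, isWalk_rotorTrail hτ hs _, ?_⟩
  rw [rotorTrail_getLast?_map_head, hper.eq, rotorTrail, List.head?_cons, Option.map_some, hs]

/-- The departures from `v` read off the successive rotor positions `x, τ v x, …, (τ v)^(k-1) x`
at `v`, where `x = s.2 v` and `(τ v)^k x` is the rotor after `n` steps. -/
theorem cons_map_filter_rotorTrail {s : V × (V → E)} (hs : G.IsRotorConfig s.2) (v : V)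
    (n : ℕ) :
    s.2 v :: ((G.rotorTrail τ s n).filter (G.tail · = v)).map (τ v) =
      (G.rotorTrail τ s n).filter (G.tail · = v) ++ [((G.rotorStep τ)^[n] s).2 v] := by
  induction n generalizing s with
  | zero => rfl
  | succ n ih =>
    have hstep := ih (hs.rotorStep hτ)
    rw [rotorTrail, iterate_succ_apply]
    by_cases hv : s.1 = v
    · subst hv
      rw [List.filter_cons_of_pos (by simpa using hs s.1), List.map_cons, List.cons_append,
        ← hstep]
      simp only [Multigraph.rotorStep, update_self]
    · rw [List.filter_cons_of_neg (by simpa [hs s.1] using hv), ← hstep]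
      simp only [Multigraph.rotorStep, update_of_ne (Ne.symm hv)]

theorem count_rotorTrail_eq [DecidableEq E] (hcyc : ∀ v, (τ v).IsCycleOn {e | G.tail e = v})
    {s : V × (V → E)} (hs : G.IsRotorConfig s.2) {p : ℕ}
    (hper : IsPeriodicPt (G.rotorStep τ) p s) {e f : E} (hef : G.tail e = G.tail f) :
    (G.rotorTrail τ s p).count e = (G.rotorTrail τ s p).count f := by
  set v := G.tail e
  set F := (G.rotorTrail τ s p).filter (G.tail · = v)
  have hF : s.2 v :: F.map (τ v) = F ++ [s.2 v] := by
    simpa only [hper.eq] using cons_map_filter_rotorTrail hτ hs v p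
  have hcount : ∀ g, G.tail g = v → (G.rotorTrail τ s p).count g = F.count g :=
    fun g hg => (List.count_filter (by simpa using hg)).symm
  rw [hcount e rfl, hcount f hef.symm]
  exact ((hcyc v).2 rfl hef.symm).apply_eq_of_forall_comp_eq (c := F.count)
    (List.count_apply_eq_of_cons_map_eq_append hF)

end Rotor

end Multigraph

theorem stmt10 {V E : Type} [Fintype V] [Fintype E] [DecidableEq V] [DecidableEq E]
    [Nonempty E] (G : Multigraph V E) (hsc : G.StronglyConnected) :
    ∃ w : List E, G.IsMultiEulerian w := by
  choose τ hτ using fun v => (univ.filter (G.tail · = v)).exists_cycleOn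
  have hcyc : ∀ v, (τ v).IsCycleOn {e | G.tail e = v} := fun v => by simpa using (hτ v).1
  have hmaps : ∀ v, Set.MapsTo (τ v) {e | G.tail e = v} {e | G.tail e = v} :=
    fun v => (hcyc v).1.mapsTo
  choose r hr using hsc.exists_tail_eq
  obtain ⟨e₀⟩ := ‹Nonempty E›
  obtain ⟨n, hn⟩ := exists_iterate_mem_periodicPts (G.rotorStep τ) (G.tail e₀, r)
  obtain ⟨p, hp, hper⟩ := mem_periodicPts.1 hn
  have hs : G.IsRotorConfig ((G.rotorStep τ)^[n] (G.tail e₀, r)).2 :=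
    Multigraph.IsRotorConfig.iterate_rotorStep hmaps (s := (_, r)) hr n
  exact ⟨_, (Multigraph.isClosedWalk_rotorTrail hmaps hs hp hper).isMultiEulerian hsc
    fun _ _ => Multigraph.count_rotorTrail_eq hmaps hcyc hs hper⟩
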